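/- Let (Ω, μ) be a probability space and let ε : Ω → ℝⁿ be an exchangeable random vector. Let R ∈ ℝⁿ have nonincreasing coordinates (R₁ ≥ ⋯ ≥ R_n), let σ be a permutation of {1,…,n}, and write R^σ for the vector with (R^σ)_i = R_{σ(i)}. Let P : ℝⁿ → ℝⁿ be a map such that for every v ∈ ℝⁿ, P v ∈ K_n and ‖v − P v‖ ≤ ‖v − w‖ for all w ∈ K_n. Let U : ℝ → ℝ be nondecreasing (convexity is NOT assumed), and assume the integrands below are integrable. Then ∫ U((P(R + ε ω)) 1) dμ(ω) ≥ ∫ U((P(R^σ + ε ω)) 1) dμ(ω): with quota one, truthful ranking maximizes the expected utility of the top adjusted score for any nondecreasing utility. -/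

import Mathlib

open MeasureTheory

noncomputable section

/-- The monotone (isotonic) cone of nonincreasing vectors in `ℝⁿ`. -/
def monoCone (n : ℕ) : Set (EuclideanSpace ℝ (Fin n)) :=
  {x | ∀ i j : Fin n, i ≤ j → x j ≤ x i}

/-- `p` is an isotonic projection of `y` onto the monotone cone. -/
def IsIsoProj {n : ℕ} (y p : EuclideanSpace ℝ (Fin n)) : Prop :=
  p ∈ monoCone n ∧ ∀ w ∈ monoCone n, ‖y - p‖ ≤ ‖y - w‖

/-- A random vector is exchangeable if its law is invariant under coordinate
permutations. -/
def Exchangeable {n : ℕ} {Ω : Type*} [MeasurableSpace Ω] (μ : Measure Ω)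
    (ε : Ω → EuclideanSpace ℝ (Fin n)) : Prop :=
  ∀ τ : Equiv.Perm (Fin n),
    Measure.map (fun ω => (WithLp.toLp 2 (fun i => ε ω (τ i)) : EuclideanSpace ℝ (Fin n))) μ =
      Measure.map ε μ

/-!
Pointwise in `ω`, the top coordinate of an isotonic projection can only grow when the data grow
in the order dual to the monotone cone (`⟪y', w⟫ ≤ ⟪y, w⟫` for every nonincreasing `w`). Indeed,
testing the variational inequality of the projections against a nonnegative nonincreasing weight
`d` supported on the top block of `p' = P y'` gives
`p'₁ ∑ d = ⟪p', d⟫ ≤ ⟪y', d⟫ ≤ ⟪y, d⟫ ≤ ⟪p, d⟫ ≤ p₁ ∑ d`.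
By the rearrangement inequality `R^σ + ε` lies below `R + ε` in this order, and `U` is monotone.
-/

open scoped RealInnerProductSpace Topology

lemma exists_lt_forall_le_of_lt {ι : Type*} [Finite ι] (f : ι → ℝ) (a : ℝ) :
    ∃ c < a, ∀ i, f i < a → f i ≤ c := by
  have hf : ∀ᶠ c in 𝓝[<] a, ∀ i, f i < a → f i ≤ c :=
    Filter.eventually_all.2 fun i => by
      by_cases hi : f i < a
      · filter_upwards [Ioo_mem_nhdsLT hi] with c hc using fun _ => hc.1.le
      · exact Filter.Eventually.of_forall fun _ h => absurd h hi
  obtain ⟨c, hc, hca⟩ := (hf.and self_mem_nhdsWithin).exists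
  exact ⟨c, hca, hc⟩

variable {n : ℕ}

lemma mem_monoCone_iff {x : EuclideanSpace ℝ (Fin n)} : x ∈ monoCone n ↔ Antitone x := Iff.rfl

lemma add_mem_monoCone {x y : EuclideanSpace ℝ (Fin n)} (hx : x ∈ monoCone n)
    (hy : y ∈ monoCone n) : x + y ∈ monoCone n :=
  Antitone.add (mem_monoCone_iff.1 hx) hy

lemma convex_monoCone (n : ℕ) : Convex ℝ (monoCone n) := by
  intro x hx y hy a b ha hb _ i j hij
  show a * x j + b * y j ≤ a * x i + b * y i
  gcongr
  exacts [hx i j hij, hy i j hij]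

lemma inner_le_apply_zero_mul_sum (hn : 0 < n) {p w : EuclideanSpace ℝ (Fin n)}
    (hp : p ∈ monoCone n) (hw : ∀ i, 0 ≤ w i) : ⟪p, w⟫ ≤ p ⟨0, hn⟩ * ∑ i, w i := by
  simp only [PiLp.inner_apply, Real.inner_apply, Finset.mul_sum]
  exact Finset.sum_le_sum fun i _ =>
    mul_le_mul_of_nonneg_right (hp _ _ (Fin.mk_le_of_le_val (Nat.zero_le _))) (hw i)

lemma inner_comp_perm_le {R w : EuclideanSpace ℝ (Fin n)} (hR : Antitone R)
    (hw : w ∈ monoCone n) (σ : Equiv.Perm (Fin n)) :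
    ⟪(WithLp.toLp 2 (fun i => R (σ i)) : EuclideanSpace ℝ (Fin n)), w⟫ ≤ ⟪R, w⟫ := by
  simp only [PiLp.inner_apply, Real.inner_apply]
  exact (hR.monovary hw).sum_comp_perm_mul_le_sum_mul

/-- The weight `(p - c)⁺`, with `c` strictly between the top value of `p` and all lower values,
is supported on the top block of `p`. -/
lemma exists_top_block_weight (hn : 0 < n) {p : EuclideanSpace ℝ (Fin n)}
    (hp : p ∈ monoCone n) :
    ∃ d ∈ monoCone n, (∀ i, 0 ≤ d i) ∧ p - d ∈ monoCone n ∧ 0 < ∑ i, d i ∧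
      ⟪p, d⟫ = p ⟨0, hn⟩ * ∑ i, d i := by
  set i₀ : Fin n := ⟨0, hn⟩
  have hp₀ : ∀ i, p i ≤ p i₀ := fun i => hp _ _ (Fin.mk_le_of_le_val (Nat.zero_le _))
  obtain ⟨c, hc, hcp⟩ := exists_lt_forall_le_of_lt p (p i₀)
  set d : EuclideanSpace ℝ (Fin n) := WithLp.toLp 2 fun i => max (p i - c) 0
  have hd : ∀ i, d i = max (p i - c) 0 := fun _ => rfl
  refine ⟨d, fun i j hij => ?_, fun i => le_max_right _ _, fun i j hij => ?_, ?_, ?_⟩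
  · simp only [hd]
    gcongr
    exact hp i j hij
  · have := hp i j hij
    simp only [PiLp.sub_apply, hd, max_def]
    split_ifs <;> linarith
  · refine Finset.sum_pos' (fun i _ => le_max_right _ _) ⟨i₀, Finset.mem_univ _, ?_⟩
    exact (sub_pos.2 hc).trans_le (le_max_left _ _)
  · simp only [PiLp.inner_apply, Real.inner_apply, Finset.mul_sum]
    refine Finset.sum_congr rfl fun i _ => ?_
    rcases (hp₀ i).lt_or_eq with hi | hi
    · simp [hd, max_eq_right (sub_nonpos.2 (hcp i hi))]
    · rw [hi]

namespace IsIsoProj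

variable {y p w : EuclideanSpace ℝ (Fin n)}

lemma inner_sub_le_zero (h : IsIsoProj y p) (hw : w ∈ monoCone n) : ⟪y - p, w - p⟫ ≤ 0 := by
  have : Nonempty (monoCone n) := ⟨⟨p, h.1⟩⟩
  refine (norm_eq_iInf_iff_real_inner_le_zero (convex_monoCone n) h.1).1 ?_ w hw
  refine le_antisymm (le_ciInf fun w => h.2 w w.2) ?_
  exact ciInf_le (f := fun w : monoCone n => ‖y - w‖)
    ⟨0, by rintro _ ⟨w, rfl⟩; exact norm_nonneg _⟩ ⟨p, h.1⟩

lemma inner_le_inner_of_mem (h : IsIsoProj y p) (hw : w ∈ monoCone n) : ⟪y, w⟫ ≤ ⟪p, w⟫ := by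
  have := h.inner_sub_le_zero (add_mem_monoCone h.1 hw)
  rwa [add_sub_cancel_left, inner_sub_left, sub_nonpos] at this

lemma inner_le_inner_of_sub_mem (h : IsIsoProj y p) (hw : p - w ∈ monoCone n) :
    ⟪p, w⟫ ≤ ⟪y, w⟫ := by
  have := h.inner_sub_le_zero hw
  rwa [sub_sub_cancel_left, inner_neg_right, inner_sub_left, neg_nonpos, sub_nonneg] at this

theorem apply_zero_le_of_inner_le (hn : 0 < n) {y' p' : EuclideanSpace ℝ (Fin n)}
    (h : IsIsoProj y p) (h' : IsIsoProj y' p')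
    (hyy' : ∀ w ∈ monoCone n, ⟪y', w⟫ ≤ ⟪y, w⟫) : p' ⟨0, hn⟩ ≤ p ⟨0, hn⟩ := by
  obtain ⟨d, hd, hd0, hpd, hsum, hinner⟩ := exists_top_block_weight hn h'.1
  refine le_of_mul_le_mul_right ?_ hsum
  calc p' ⟨0, hn⟩ * ∑ i, d i = ⟪p', d⟫ := hinner.symm
    _ ≤ ⟪y', d⟫ := h'.inner_le_inner_of_sub_mem hpd
    _ ≤ ⟪y, d⟫ := hyy' d hd
    _ ≤ ⟪p, d⟫ := h.inner_le_inner_of_mem hd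
    _ ≤ p ⟨0, hn⟩ * ∑ i, d i := inner_le_apply_zero_mul_sum hn h.1 hd0

end IsIsoProj

theorem quota_one_truthfulness_nondecreasing_utility_general
    {n : ℕ} (hn : 0 < n) {Ω : Type*} [MeasurableSpace Ω]
    (μ : Measure Ω)
    (ε : Ω → EuclideanSpace ℝ (Fin n))
    (R : EuclideanSpace ℝ (Fin n)) (hR : ∀ i j : Fin n, i ≤ j → R j ≤ R i)
    (σ : Equiv.Perm (Fin n))
    (P : EuclideanSpace ℝ (Fin n) → EuclideanSpace ℝ (Fin n))
    (hP : ∀ v, IsIsoProj v (P v))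
    (U : ℝ → ℝ) (hU : Monotone U)
    (hint_true : Integrable (fun ω => U (P (R + ε ω) ⟨0, hn⟩)) μ)
    (hint_perm : Integrable (fun ω =>
      U (P (WithLp.toLp 2 (fun i => R (σ i) + ε ω i) : EuclideanSpace ℝ (Fin n)) ⟨0, hn⟩)) μ) :
    ∫ ω, U (P (WithLp.toLp 2 (fun i => R (σ i) + ε ω i) : EuclideanSpace ℝ (Fin n)) ⟨0, hn⟩) ∂μ ≤
      ∫ ω, U (P (R + ε ω) ⟨0, hn⟩) ∂μ := by
  refine integral_mono hint_perm hint_true fun ω => hU ?_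
  refine (hP (R + ε ω)).apply_zero_le_of_inner_le hn (hP _) fun w hw => ?_
  have hsplit : (WithLp.toLp 2 (fun i => R (σ i) + ε ω i) : EuclideanSpace ℝ (Fin n)) =
      WithLp.toLp 2 (fun i => R (σ i)) + ε ω := rfl
  rw [hsplit, inner_add_left, inner_add_left]
  exact add_le_add_left (inner_comp_perm_le hR hw σ) _

/-- With quota one, truthful ranking maximizes the expected utility of the top
adjusted score for any nondecreasing utility (convexity is not assumed). -/
theorem quota_one_truthfulness_nondecreasing_utility
    {n : ℕ} (hn : 0 < n) {Ω : Type*} [MeasurableSpace Ω]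
    (μ : Measure Ω) [IsProbabilityMeasure μ]
    (ε : Ω → EuclideanSpace ℝ (Fin n)) (hε : Exchangeable μ ε)
    (R : EuclideanSpace ℝ (Fin n)) (hR : ∀ i j : Fin n, i ≤ j → R j ≤ R i)
    (σ : Equiv.Perm (Fin n))
    (P : EuclideanSpace ℝ (Fin n) → EuclideanSpace ℝ (Fin n))
    (hP : ∀ v, IsIsoProj v (P v))
    (U : ℝ → ℝ) (hU : Monotone U)
    (hint_true : Integrable (fun ω => U (P (R + ε ω) ⟨0, hn⟩)) μ)
    (hint_perm : Integrable (fun ω =>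
      U (P (WithLp.toLp 2 (fun i => R (σ i) + ε ω i) : EuclideanSpace ℝ (Fin n)) ⟨0, hn⟩)) μ) :
    ∫ ω, U (P (WithLp.toLp 2 (fun i => R (σ i) + ε ω i) : EuclideanSpace ℝ (Fin n)) ⟨0, hn⟩) ∂μ ≤
      ∫ ω, U (P (R + ε ω) ⟨0, hn⟩) ∂μ :=
  quota_one_truthfulness_nondecreasing_utility_general hn μ ε R hR σ P hP U hU hint_true hint_perm
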